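/- A string w of terminals belongs to L(G_stack) if and only if w is nonempty, w ∈ T_stack, executing all of w from the empty stack ends with the empty stack, and the stack is nonempty after executing every nonempty proper prefix of w. -/

import Mathlib

/-- τ1 ∼ τ2 : the two sequences admit exactly the same legal continuations. -/
def SpecEquiv {A : Type} (T : Set (List A)) (τ1 τ2 : List A) : Prop :=
  ∀ τ' : List A, τ1 ++ τ' ∈ T ↔ τ2 ++ τ' ∈ T

/-- A specification is anagram-agnostic if any two of its members that are
permutations of one another (anagrams) are equivalent. -/
def AnagramAgnostic {A : Type} (T : Set (List A)) : Prop :=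
  ∀ τ1 ∈ T, ∀ τ2 ∈ T, τ1.Perm τ2 → SpecEquiv T τ1 τ2

inductive StackOp (V : Type) : Type
  | push (v : V) : StackOp V
  | pop (v : V) : StackOp V
  | peek (v : V) : StackOp V
deriving DecidableEq

/-- Execution of stack sequences: `StackExec σ w σ'` holds when the sequence
`w` can be legally executed starting from stack `σ` (top at the head), ending
with stack `σ'`.  `push v` pushes `v`; `pop v` (resp. `peek v`) is enabled
only when the top is `v` and removes it (resp. leaves the stack unchanged). -/
inductive StackExec {V : Type} : List V → List (StackOp V) → List V → Prop
  | nil (σ : List V) : StackExec σ [] σ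
  | push {σ σ' : List V} {w : List (StackOp V)} (v : V) :
      StackExec (v :: σ) w σ' → StackExec σ (StackOp.push v :: w) σ'
  | pop {σ σ' : List V} {w : List (StackOp V)} (v : V) :
      StackExec σ w σ' → StackExec (v :: σ) (StackOp.pop v :: w) σ'
  | peek {σ σ' : List V} {w : List (StackOp V)} (v : V) :
      StackExec (v :: σ) w σ' → StackExec (v :: σ) (StackOp.peek v :: w) σ'

/-- The stack specification: sequences executable from the empty stack. -/
def TStack (V : Type) : Set (List (StackOp V)) :=
  {w | ∃ σ : List V, StackExec [] w σ}

/-- Nonterminals of the stack grammar: `T0` is `T(ε)`, `Tv v` is `T(v)`,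
`Pu v` is `Push(v)` and `Pe v` is `Peek(v)`. -/
inductive StackNT (V : Type) : Type
  | T0 : StackNT V
  | Tv (v : V) : StackNT V
  | Pu (v : V) : StackNT V
  | Pe (v : V) : StackNT V
deriving DecidableEq

/-- Grammar symbols: nonterminals (left) or terminals (right). -/
abbrev GSym (V : Type) : Type := StackNT V ⊕ StackOp V

/-- Productions of the stack grammar. -/
inductive StackProd {V : Type} : StackNT V → List (GSym V) → Prop
  | r1 (v : V) : StackProd StackNT.T0 [Sum.inl (StackNT.Pu v), Sum.inl (StackNT.Tv v)]
  | r2 (v : V) : StackProd (StackNT.Tv v) [Sum.inl (StackNT.Pe v), Sum.inl (StackNT.Tv v)]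
  | r3 (v : V) : StackProd (StackNT.Tv v) [Sum.inl StackNT.T0, Sum.inl (StackNT.Tv v)]
  | r4 (v : V) : StackProd (StackNT.Tv v) [Sum.inr (StackOp.pop v)]
  | r5 (v : V) : StackProd (StackNT.Pu v) [Sum.inr (StackOp.push v)]
  | r6 (v : V) : StackProd (StackNT.Pe v) [Sum.inr (StackOp.peek v)]

/-- One rewriting step of the stack grammar. -/
def StackStep {V : Type} (x y : List (GSym V)) : Prop :=
  ∃ (p s : List (GSym V)) (A : StackNT V) (rhs : List (GSym V)),
    StackProd A rhs ∧ x = p ++ Sum.inl A :: s ∧ y = p ++ rhs ++ s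

/-- Derivation relation `→*` of the stack grammar. -/
def StackDerives {V : Type} : List (GSym V) → List (GSym V) → Prop :=
  Relation.ReflTransGen StackStep

/-- The language of the stack grammar: strings of terminals derivable from
the start symbol `T(ε)`. -/
def StackLang (V : Type) : Set (List (StackOp V)) :=
  {w | StackDerives [Sum.inl StackNT.T0] (w.map Sum.inr)}

section Aux
variable {V : Type}

open Classical in
noncomputable def runS : List V → List (StackOp V) → Option (List V)
  | σ, [] => some σ
  | σ, .push v :: w => runS (v :: σ) w
  | [], .pop _ :: _ => none
  | v' :: σ, .pop v :: w => if v = v' then runS σ w else none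
  | [], .peek _ :: _ => none
  | v' :: σ, .peek v :: w => if v = v' then runS (v' :: σ) w else none

theorem exec_run {σ τ : List V} {w : List (StackOp V)} (h : StackExec σ w τ) :
    runS σ w = some τ := by
  induction h with
  | nil => simp [runS]
  | push v h ih => simpa [runS] using ih
  | pop v h ih => simpa [runS] using ih
  | peek v h ih => simpa [runS] using ih

theorem run_exec {w : List (StackOp V)} : ∀ {σ τ : List V},
    runS σ w = some τ → StackExec σ w τ := by
  induction w with
  | nil => intro σ τ h; simp only [runS, Option.some.injEq] at h; subst h; exact .nil σ
  | cons op w ih =>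
    intro σ τ h
    match op, σ with
    | .push v, σ => exact .push v (ih (by simpa [runS] using h))
    | .pop v, [] => simp [runS] at h
    | .pop v, v' :: σ =>
      simp only [runS] at h
      split at h
      · subst ‹v = v'›; exact .pop v (ih h)
      · simp at h
    | .peek v, [] => simp [runS] at h
    | .peek v, v' :: σ =>
      simp only [runS] at h
      split at h
      · subst ‹v = v'›; exact .peek v (ih h)
      · simp at h

theorem run_append (x y : List (StackOp V)) : ∀ σ : List V,
    runS σ (x ++ y) = (runS σ x).bind fun τ => runS τ y := by
  induction x with
  | nil => intro σ; simp [runS]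
  | cons op x ih =>
    intro σ
    match op, σ with
    | .push v, σ => simpa [runS] using ih (v :: σ)
    | .pop v, [] => simp [runS]
    | .pop v, v' :: σ =>
      simp only [List.cons_append, runS]; split <;> simp [ih]
    | .peek v, [] => simp [runS]
    | .peek v, v' :: σ =>
      simp only [List.cons_append, runS]; split <;> simp [ih]

theorem run_prefix {w p : List (StackOp V)} {σ τ : List V} (hp : p <+: w)
    (h : runS σ w = some τ) : ∃ τ₀, runS σ p = some τ₀ := by
  obtain ⟨q, rfl⟩ := hp
  rw [run_append] at h
  cases hr : runS σ p with
  | none => rw [hr] at h; simp at h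
  | some τ₀ => exact ⟨τ₀, rfl⟩

/-- barrier lemma: if the stack starts with suffix `a :: ρ` and never equals `ρ`
at any prefix point, the suffix `a :: ρ` is preserved. -/
theorem barrier {a : V} {ρ : List V} : ∀ (w : List (StackOp V)) (σ τ : List V),
    runS σ w = some τ → (a :: ρ) <:+ σ →
    (∀ p, p <+: w → ∀ τ₀, runS σ p = some τ₀ → τ₀ ≠ ρ) → (a :: ρ) <:+ τ := by
  intro w
  induction w with
  | nil => intro σ τ h hs _; simp only [runS, Option.some.injEq] at h; subst h; exact hs
  | cons op w ih =>
    intro σ τ h hs hbar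
    match op, σ with
    | .push v, σ =>
      refine ih (v :: σ) τ (by simpa [runS] using h) (hs.trans (List.suffix_cons v σ)) ?_
      intro p hp τ₀ h₀
      exact hbar (.push v :: p) (List.cons_prefix_cons.2 ⟨rfl, hp⟩) τ₀ (by simpa [runS] using h₀)
    | .pop v, [] => simp [runS] at h
    | .pop v, v' :: σ =>
      simp only [runS] at h
      split at h
      · rcases List.suffix_cons_iff.1 hs with heq | hs'
        · exfalso
          refine hbar [.pop v] ⟨w, rfl⟩ σ ?_ ?_
          · simp only [runS]; rw [if_pos ‹v = v'›]
          · injection heq with h1 h2; exact h2.symm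
        · refine ih σ τ h hs' ?_
          intro p hp τ₀ h₀
          refine hbar (.pop v :: p) (List.cons_prefix_cons.2 ⟨rfl, hp⟩) τ₀ ?_
          simp only [runS]; rwa [if_pos ‹v = v'›]
      · simp at h
    | .peek v, [] => simp [runS] at h
    | .peek v, v' :: σ =>
      simp only [runS] at h
      split at h
      · refine ih (v' :: σ) τ h hs ?_
        intro p hp τ₀ h₀
        refine hbar (.peek v :: p) (List.cons_prefix_cons.2 ⟨rfl, hp⟩) τ₀ ?_
        simp only [runS]; rwa [if_pos ‹v = v'›]
      · simp at h

/-- Inductive generation relation mirroring the productions. -/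
inductive Gen : StackNT V → List (StackOp V) → Prop
  | r1 {v w1 w2} : Gen (.Pu v) w1 → Gen (.Tv v) w2 → Gen .T0 (w1 ++ w2)
  | r2 {v w1 w2} : Gen (.Pe v) w1 → Gen (.Tv v) w2 → Gen (.Tv v) (w1 ++ w2)
  | r3 {v w1 w2} : Gen .T0 w1 → Gen (.Tv v) w2 → Gen (.Tv v) (w1 ++ w2)
  | r4 (v) : Gen (.Tv v) [.pop v]
  | r5 (v) : Gen (.Pu v) [.push v]
  | r6 (v) : Gen (.Pe v) [.peek v]

def SemOf : StackNT V → List (StackOp V) → Prop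
  | .T0, w => w ≠ [] ∧ ∀ σ : List V, runS σ w = some σ ∧
      ∀ p, p <+: w → p ≠ w → p ≠ [] → ∀ τ, runS σ p = some τ → ∃ u, u ≠ [] ∧ τ = u ++ σ
  | .Tv v, w => w ≠ [] ∧ ∀ σ : List V, runS (v :: σ) w = some σ ∧
      ∀ p, p <+: w → p ≠ w → ∀ τ, runS (v :: σ) p = some τ → (v :: σ) <:+ τ
  | .Pu v, w => w = [.push v]
  | .Pe v, w => w = [.peek v]

theorem prefix_append_cases {p w1 w2 : List (StackOp V)} (h : p <+: w1 ++ w2) :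
    p <+: w1 ∨ ∃ q, q <+: w2 ∧ p = w1 ++ q := by
  obtain ⟨r, hr⟩ := h
  rcases List.append_eq_append_iff.1 hr with ⟨a', ha, _⟩ | ⟨c', hc, hw⟩
  · exact Or.inl ⟨a', ha.symm⟩
  · exact Or.inr ⟨c', ⟨r, hw.symm⟩, hc⟩


theorem prefix_singleton {p : List (StackOp V)} {a : StackOp V} (h : p <+: [a]) :
    p = [] ∨ p = [a] := by
  obtain ⟨t, ht⟩ := h
  match p, t, ht with
  | [], _, _ => exact Or.inl rfl
  | [x], [], ht => simp_all
  | x :: y :: p, t, ht => simp at ht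

theorem gen_sem {A : StackNT V} {w : List (StackOp V)} (h : Gen A w) : SemOf A w := by
  induction h with
  | @r1 v w1 w2 h1 h2 ih1 ih2 =>
    subst ih1
    obtain ⟨hne2, H2⟩ := ih2
    refine ⟨by simp, fun σ => ?_⟩
    obtain ⟨hrun2, hpre2⟩ := H2 σ
    refine ⟨by simpa [runS] using hrun2, ?_⟩
    intro p hp hpw hpn τ hτ
    match p with
    | [] => exact absurd rfl hpn
    | x :: p' =>
      rw [List.singleton_append] at hp hpw
      obtain ⟨rfl, hp'⟩ := List.cons_prefix_cons.1 hp
      have hp'w : p' ≠ w2 := fun h => hpw (by rw [h])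
      have hτ' : runS (v :: σ) p' = some τ := by simpa [runS] using hτ
      obtain ⟨u, hu⟩ := hpre2 p' hp' hp'w τ hτ'
      exact ⟨u ++ [v], by simp, by simp [← hu]⟩
  | @r2 v w1 w2 h1 h2 ih1 ih2 =>
    subst ih1
    obtain ⟨hne2, H2⟩ := ih2
    refine ⟨by simp, fun σ => ?_⟩
    obtain ⟨hrun2, hpre2⟩ := H2 σ
    refine ⟨by simpa [runS] using hrun2, ?_⟩
    intro p hp hpw τ hτ
    match p with
    | [] =>
      simp only [runS, Option.some.injEq] at hτ
      exact hτ ▸ List.suffix_refl _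
    | x :: p' =>
      rw [List.singleton_append] at hp hpw
      obtain ⟨rfl, hp'⟩ := List.cons_prefix_cons.1 hp
      have hp'w : p' ≠ w2 := fun h => hpw (by rw [h])
      exact hpre2 p' hp' hp'w τ (by simpa [runS] using hτ)
  | @r3 v w1 w2 h1 h2 ih1 ih2 =>
    obtain ⟨hne1, H1⟩ := ih1
    obtain ⟨hne2, H2⟩ := ih2
    refine ⟨by simp [hne1], fun σ => ?_⟩
    obtain ⟨hrun1, hpre1⟩ := H1 (v :: σ)
    obtain ⟨hrun2, hpre2⟩ := H2 σ
    have hruns : runS (v :: σ) (w1 ++ w2) = some σ := by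
      rw [run_append, hrun1]; exact hrun2
    refine ⟨hruns, ?_⟩
    intro p hp hpw τ hτ
    rcases prefix_append_cases hp with hp1 | ⟨q, hq, rfl⟩
    · by_cases hpe : p = w1
      · subst hpe
        rw [hrun1] at hτ
        injection hτ with hτ; exact hτ ▸ List.suffix_refl _
      · by_cases hpn : p = []
        · subst hpn
          simp only [runS, Option.some.injEq] at hτ
          exact hτ ▸ List.suffix_refl _
        · obtain ⟨u, hu, rfl⟩ := hpre1 p hp1 hpe hpn τ hτ
          exact List.suffix_append u _
    · rw [run_append, hrun1] at hτ
      have hqw : q ≠ w2 := fun h => hpw (by rw [h])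
      exact hpre2 q hq hqw τ hτ
  | r4 v =>
    refine ⟨by simp, fun σ => ⟨by simp [runS], ?_⟩⟩
    intro p hp hpw τ hτ
    rcases prefix_singleton hp with rfl | rfl
    · simp only [runS, Option.some.injEq] at hτ
      exact hτ ▸ List.suffix_refl _
    · exact absurd rfl hpw
  | r5 v => rfl
  | r6 v => rfl

theorem proper_prefix_length {p w : List (StackOp V)} (hp : p <+: w) (hne : p ≠ w) :
    p.length < w.length :=
  lt_of_le_of_ne hp.length_le (fun h => hne (List.IsPrefix.eq_of_length hp h))

theorem comp : ∀ (n : ℕ) (w : List (StackOp V)) (v : V) (σ : List V), w.length ≤ n →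
    runS (v :: σ) w = some σ →
    (∀ p, p <+: w → p ≠ w → ∀ τ, runS (v :: σ) p = some τ → (v :: σ) <:+ τ) →
    Gen (StackNT.Tv v) w := by
  intro n
  induction n with
  | zero =>
    intro w v σ hl hr _
    rw [List.length_eq_zero_iff.1 (Nat.le_zero.1 hl)] at hr
    simp only [runS, Option.some.injEq] at hr
    exact absurd (congrArg List.length hr) (by simp)
  | succ n ih =>
    intro w v σ hl hr hpre
    match w with
    | [] =>
      simp only [runS, Option.some.injEq] at hr
      exact absurd (congrArg List.length hr) (by simp)
    | .pop v' :: w' =>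
      simp only [runS] at hr
      split at hr
      · subst ‹v' = v›
        by_cases hw' : w' = []
        · subst hw'; exact Gen.r4 v'
        · exfalso
          have h1 : [StackOp.pop v'] <+: (StackOp.pop v' :: w') := ⟨w', rfl⟩
          have h2 : [StackOp.pop v'] ≠ (StackOp.pop v' :: w') := by
            intro h; injection h with _ h; exact hw' h.symm
          have h3 : runS (v' :: σ) [StackOp.pop v'] = some σ := by simp [runS]
          have := hpre _ h1 h2 σ h3
          have := this.length_le
          simp at this
      · simp at hr
    | .peek v' :: w' =>
      simp only [runS] at hr
      split at hr
      · subst ‹v' = v›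
        have hg : Gen (StackNT.Tv v') w' := by
          refine ih w' v' σ (by simpa using hl) hr ?_
          intro p hp hpw τ hτ
          refine hpre (.peek v' :: p) (List.cons_prefix_cons.2 ⟨rfl, hp⟩)
            (fun h => hpw (by injection h)) τ ?_
          simpa [runS] using hτ
        exact (List.singleton_append ▸ Gen.r2 (Gen.r6 v') hg :
          Gen (StackNT.Tv v') (.peek v' :: w'))
      · simp at hr
    | .push a :: w' =>
      classical
      simp only [runS] at hr
      -- hr : runS (a :: v :: σ) w' = some σ
      have hex : ∃ m, m ≤ w'.length ∧ runS (a :: v :: σ) (w'.take m) = some (v :: σ) := by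
        by_contra hno
        push_neg at hno
        have hbar : ∀ p, p <+: w' → ∀ τ₀, runS (a :: v :: σ) p = some τ₀ → τ₀ ≠ v :: σ := by
          intro p hp τ₀ h₀ hcon
          subst hcon
          exact (hno p.length hp.length_le) (by rwa [← List.prefix_iff_eq_take.1 hp])
        have := barrier w' (a :: v :: σ) σ hr (List.suffix_refl _) hbar
        have := this.length_le
        simp at this
      obtain ⟨hmle, hmrun⟩ := Nat.find_spec hex
      set m := Nat.find hex with hmdef
      have hmin : ∀ k, k < m → k ≤ w'.length →
          runS (a :: v :: σ) (w'.take k) ≠ some (v :: σ) := by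
        intro k hk hkle hcon
        exact Nat.find_min hex hk ⟨hkle, hcon⟩
      have hm0 : m ≠ 0 := by
        intro h
        rw [h] at hmrun
        simp only [List.take_zero, runS, Option.some.injEq] at hmrun
        exact absurd (congrArg List.length hmrun) (by simp)
      set p := w'.take m with hpdef
      set rest := w'.drop m with hrestdef
      have hsplit : w' = p ++ rest := (List.take_append_drop m w').symm
      have hplen : p.length = m := by
        rw [hpdef, List.length_take]; exact min_eq_left hmle
      -- Gen (Tv a) p
      have hga : Gen (StackNT.Tv a) p := by
        refine ih p a (v :: σ) ?_ hmrun ?_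
        · rw [hplen]
          calc m ≤ w'.length := hmle
            _ ≤ n := by simpa using hl
        · intro p₀ hp₀ hp₀p τ h₀
          refine barrier p₀ (a :: v :: σ) τ h₀ (List.suffix_refl _) ?_
          intro q hq τ₀ hq₀ hcon
          subst hcon
          have hqw' : q <+: w' := (hq.trans hp₀).trans (List.take_prefix m w')
          have hqlen : q.length < m := by
            calc q.length ≤ p₀.length := hq.length_le
              _ < p.length := proper_prefix_length hp₀ hp₀p
              _ = m := hplen
          exact hmin q.length hqlen hqw'.length_le
            (by rwa [← List.prefix_iff_eq_take.1 hqw'])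
      -- Gen (Tv v) rest
      have hrrest : runS (v :: σ) rest = some σ := by
        rw [hsplit, run_append, hmrun] at hr
        exact hr
      have hgr : Gen (StackNT.Tv v) rest := by
        refine ih rest v σ ?_ hrrest ?_
        · rw [hrestdef, List.length_drop]
          have : w'.length ≤ n := by simpa using hl
          omega
        · intro p₂ hp₂ hp₂r τ h₂
          have hpp : p ++ p₂ <+: w' := by
            rw [hsplit]; exact (List.prefix_append_right_inj p).2 hp₂
          have hppne : StackOp.push a :: (p ++ p₂) ≠ StackOp.push a :: w' := by
            intro h
            injection h with _ h
            rw [hsplit] at h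
            exact hp₂r (List.append_cancel_left h)
          have hrun₂ : runS (v :: σ) (StackOp.push a :: (p ++ p₂)) = some τ := by
            simp only [runS]
            rw [run_append, hmrun]
            exact h₂
          exact hpre _ (List.cons_prefix_cons.2 ⟨rfl, hpp⟩) hppne τ hrun₂
      have : Gen (StackNT.Tv v) ((StackOp.push a :: p) ++ rest) :=
        Gen.r3 (List.singleton_append ▸ Gen.r1 (Gen.r5 a) hga) hgr
      rw [hsplit]
      simpa using this

/-- Parallel generation for sentential forms. -/
inductive ListGen : List (GSym V) → List (StackOp V) → Prop
  | nil : ListGen [] []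
  | term {α w} (a) : ListGen α w → ListGen (.inr a :: α) (a :: w)
  | nt {A α u w} : Gen A u → ListGen α w → ListGen (.inl A :: α) (u ++ w)

theorem listGen_append : ∀ {x y : List (GSym V)} {w1 w2 : List (StackOp V)},
    ListGen x w1 → ListGen y w2 → ListGen (x ++ y) (w1 ++ w2) := by
  intro x y w1 w2 h1 h2
  induction h1 with
  | nil => exact h2
  | term a _ ih => exact ListGen.term a ih
  | nt hg _ ih => rw [List.append_assoc]; exact ListGen.nt hg ih

theorem listGen_append_inv : ∀ {x y : List (GSym V)} {w : List (StackOp V)},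
    ListGen (x ++ y) w → ∃ w1 w2, w = w1 ++ w2 ∧ ListGen x w1 ∧ ListGen y w2 := by
  intro x
  induction x with
  | nil => exact fun h => ⟨[], _, rfl, ListGen.nil, h⟩
  | cons s x ih =>
    intro y w h
    cases h with
    | term a h' =>
      obtain ⟨w1, w2, rfl, hx, hy⟩ := ih h'
      exact ⟨a :: w1, w2, rfl, ListGen.term a hx, hy⟩
    | nt hg h' =>
      obtain ⟨w1, w2, rfl, hx, hy⟩ := ih h'
      exact ⟨_ ++ w1, w2, by rw [List.append_assoc], ListGen.nt hg hx, hy⟩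

theorem listGen_terminal : ∀ w : List (StackOp V), ListGen (w.map Sum.inr) w := by
  intro w
  induction w with
  | nil => exact ListGen.nil
  | cons a w ih => exact ListGen.term a ih

theorem prod_gen {A : StackNT V} {rhs : List (GSym V)} {u : List (StackOp V)}
    (hp : StackProd A rhs) (hg : ListGen rhs u) : Gen A u := by
  cases hp with
  | r1 v =>
    cases hg with | nt h1 hg' =>
    cases hg' with | nt h2 hg'' =>
    cases hg''
    rw [List.append_nil]
    exact Gen.r1 h1 h2
  | r2 v =>
    cases hg with | nt h1 hg' =>
    cases hg' with | nt h2 hg'' =>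
    cases hg''
    rw [List.append_nil]
    exact Gen.r2 h1 h2
  | r3 v =>
    cases hg with | nt h1 hg' =>
    cases hg' with | nt h2 hg'' =>
    cases hg''
    rw [List.append_nil]
    exact Gen.r3 h1 h2
  | r4 v =>
    cases hg with | term _ hg' =>
    cases hg'
    exact Gen.r4 v
  | r5 v =>
    cases hg with | term _ hg' =>
    cases hg'
    exact Gen.r5 v
  | r6 v =>
    cases hg with | term _ hg' =>
    cases hg'
    exact Gen.r6 v

theorem step_listGen {x y : List (GSym V)} {w : List (StackOp V)}
    (hs : StackStep x y) (hg : ListGen y w) : ListGen x w := by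
  obtain ⟨p, s, A, rhs, hprod, rfl, rfl⟩ := hs
  rw [List.append_assoc] at hg
  obtain ⟨w1, w', rfl, hp, h'⟩ := listGen_append_inv hg
  obtain ⟨w2, w3, rfl, hrhs, hsg⟩ := listGen_append_inv h'
  exact listGen_append hp (ListGen.nt (prod_gen hprod hrhs) hsg)

theorem derives_listGen {α : List (GSym V)} {w : List (StackOp V)}
    (h : StackDerives α (w.map Sum.inr)) : ListGen α w := by
  induction h using Relation.ReflTransGen.head_induction_on with
  | refl => exact listGen_terminal w
  | head hstep _ ih => exact step_listGen hstep ih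

theorem lang_gen {w : List (StackOp V)} (h : w ∈ StackLang V) : Gen StackNT.T0 w := by
  have := derives_listGen h
  cases this with
  | nt hg h' =>
    cases h'
    simpa using hg

theorem stackStep_append {x y l r : List (GSym V)} (h : StackStep x y) :
    StackStep (l ++ x ++ r) (l ++ y ++ r) := by
  obtain ⟨p, s, A, rhs, hprod, rfl, rfl⟩ := h
  exact ⟨l ++ p, s ++ r, A, rhs, hprod, by simp, by simp⟩

theorem derives_append {x y l r : List (GSym V)} (h : StackDerives x y) :
    StackDerives (l ++ x ++ r) (l ++ y ++ r) :=
  Relation.ReflTransGen.lift (fun z => l ++ z ++ r) (fun _ _ h => stackStep_append h) _ _ h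

theorem gen_derives {A : StackNT V} {w : List (StackOp V)} (h : Gen A w) :
    StackDerives [Sum.inl A] (w.map Sum.inr) := by
  induction h with
  | @r1 v w1 w2 _ _ ih1 ih2 =>
    refine Relation.ReflTransGen.head
      (⟨[], [], _, _, StackProd.r1 v, rfl, rfl⟩ : StackStep _ _) ?_
    have d1 : StackDerives ([] ++ [Sum.inl (StackNT.Pu v)] ++ [Sum.inl (StackNT.Tv v)])
        ([] ++ w1.map Sum.inr ++ [Sum.inl (StackNT.Tv v)]) := derives_append ih1
    have d2 : StackDerives (w1.map Sum.inr ++ [Sum.inl (StackNT.Tv v)] ++ [])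
        (w1.map Sum.inr ++ w2.map Sum.inr ++ []) := derives_append ih2
    simp only [List.nil_append, List.append_nil] at d1 d2
    refine (d1.trans d2).trans ?_
    rw [← List.map_append]
  | @r2 v w1 w2 _ _ ih1 ih2 =>
    refine Relation.ReflTransGen.head
      (⟨[], [], _, _, StackProd.r2 v, rfl, rfl⟩ : StackStep _ _) ?_
    have d1 : StackDerives ([] ++ [Sum.inl (StackNT.Pe v)] ++ [Sum.inl (StackNT.Tv v)])
        ([] ++ w1.map Sum.inr ++ [Sum.inl (StackNT.Tv v)]) := derives_append ih1
    have d2 : StackDerives (w1.map Sum.inr ++ [Sum.inl (StackNT.Tv v)] ++ [])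
        (w1.map Sum.inr ++ w2.map Sum.inr ++ []) := derives_append ih2
    simp only [List.nil_append, List.append_nil] at d1 d2
    refine (d1.trans d2).trans ?_
    rw [← List.map_append]
  | @r3 v w1 w2 _ _ ih1 ih2 =>
    refine Relation.ReflTransGen.head
      (⟨[], [], _, _, StackProd.r3 v, rfl, rfl⟩ : StackStep _ _) ?_
    have d1 : StackDerives ([] ++ [Sum.inl StackNT.T0] ++ [Sum.inl (StackNT.Tv v)])
        ([] ++ w1.map Sum.inr ++ [Sum.inl (StackNT.Tv v)]) := derives_append ih1
    have d2 : StackDerives (w1.map Sum.inr ++ [Sum.inl (StackNT.Tv v)] ++ [])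
        (w1.map Sum.inr ++ w2.map Sum.inr ++ []) := derives_append ih2
    simp only [List.nil_append, List.append_nil] at d1 d2
    refine (d1.trans d2).trans ?_
    rw [← List.map_append]
  | r4 v =>
    exact Relation.ReflTransGen.single ⟨[], [], _, _, StackProd.r4 v, rfl, rfl⟩
  | r5 v =>
    exact Relation.ReflTransGen.single ⟨[], [], _, _, StackProd.r5 v, rfl, rfl⟩
  | r6 v =>
    exact Relation.ReflTransGen.single ⟨[], [], _, _, StackProd.r6 v, rfl, rfl⟩

end Aux

theorem stmt12 {V : Type} (w : List (StackOp V)) :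
    w ∈ StackLang V ↔
      w ≠ [] ∧ w ∈ TStack V ∧ StackExec [] w [] ∧
        (∀ p : List (StackOp V), ∀ σ : List V,
          p ≠ [] → p ≠ w → p <+: w → StackExec [] p σ → σ ≠ []) := by
  constructor
  · intro h
    have hg := lang_gen h
    obtain ⟨hne, H⟩ := gen_sem hg
    obtain ⟨hrun, hpre⟩ := H []
    have hexec : StackExec [] w [] := run_exec hrun
    refine ⟨hne, ⟨[], hexec⟩, hexec, ?_⟩
    intro p σ hpn hpw hp hex
    have hps : runS [] p = some σ := exec_run hex
    obtain ⟨u, hu, rfl⟩ := hpre p hp hpw hpn σ hps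
    simpa using hu
  · rintro ⟨hne, -, hexec, hpre⟩
    have hr : runS ([] : List V) w = some [] := exec_run hexec
    match w, hne with
    | .push a :: w', _ =>
      simp only [runS] at hr
      have hg : Gen (StackNT.Tv a) w' := by
        refine comp w'.length w' a [] le_rfl hr ?_
        intro p hp hpw' τ hτ
        refine barrier p [a] τ hτ (List.suffix_refl _) ?_
        intro q hq τ₀ hq₀ hcon
        subst hcon
        have hqw' : q ≠ w' := by
          intro h
          subst h
          exact hpw' (List.IsPrefix.eq_of_length hp
            (le_antisymm hp.length_le (hq.length_le)))
        refine hpre (.push a :: q) [] (by simp) (fun h => hqw' (by injection h))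
          (List.cons_prefix_cons.2 ⟨rfl, hq.trans hp⟩) ?_ rfl
        exact run_exec (by simpa [runS] using hq₀)
      have : Gen StackNT.T0 ((StackOp.push a :: []) ++ w') :=
        Gen.r1 (Gen.r5 a) hg
      have hgen : Gen StackNT.T0 (StackOp.push a :: w') := by simpa using this
      exact gen_derives hgen
    | .pop a :: w', _ => simp [runS] at hr
    | .peek a :: w', _ => simp [runS] at hr
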